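/- Let G be a graph with maximum degree Δ, independence number α ≥ 2Δ, and chromatic number χ. Then φ(G) ≥ (n - (2Δ - 1)(χ - 1))/α - 1, where n = |V(G)|. -/

import Mathlib

open SimpleGraph

noncomputable def chi {W : Type*} (G : SimpleGraph W) : ℕ := G.chromaticNumber.toNat

def IsProper {W : Type*} (G : SimpleGraph W) (c : W → ℕ) : Prop :=
  ∀ ⦃u v⦄, G.Adj u v → c u ≠ c v

noncomputable def disc {W : Type*} (G : SimpleGraph W) (c : W → ℕ) (s : Finset W) : ℕ :=
  (s.image c).card - chi (G.induce (s : Set W))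

noncomputable def phiC {W : Type*} [Fintype W] (G : SimpleGraph W) (c : W → ℕ) : ℕ :=
  Finset.univ.sup (disc G c)

noncomputable def phi {W : Type*} [Fintype W] (G : SimpleGraph W) : ℕ :=
  sInf {n | ∃ c, IsProper G c ∧ phiC G c = n}

open Classical in
noncomputable def phiHatC {W : Type*} [Fintype W] (G : SimpleGraph W) (c : W → ℕ) : ℕ :=
  Finset.univ.sup (fun s : Finset W =>
    if (G.induce (s : Set W)).Connected then disc G c s else 0)

noncomputable def phiHat {W : Type*} [Fintype W] (G : SimpleGraph W) : ℕ :=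
  sInf {n | ∃ c, IsProper G c ∧ phiHatC G c = n}

open Classical in
noncomputable def indepNum' {W : Type*} [Fintype W] (G : SimpleGraph W) : ℕ :=
  Finset.univ.sup fun s : Finset W =>
    if ∀ u ∈ s, ∀ v ∈ s, ¬ G.Adj u v then s.card else 0

open Classical in
noncomputable def cliqueNum' {W : Type*} [Fintype W] (G : SimpleGraph W) : ℕ :=
  Finset.univ.sup fun s : Finset W =>
    if G.IsClique (s : Set W) then s.card else 0

/-! Fix a proper colouring `c` attaining `φ(G)` and call a colour class large if it has at least
`2Δ` vertices. By Haxell's theorem the `r` large classes have an independent transversal, an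
independent set showing `r - 1 ≤ φ(G)`; the whole vertex set shows that the number `k` of colours
satisfies `k ≤ φ(G) + χ`. Large classes have at most `α` vertices and the others at most `2Δ - 1`,
so `n ≤ rα + (k - r)(2Δ - 1) ≤ (φ(G) + 1)α + (χ - 1)(2Δ - 1)`.

Haxell's theorem is proved by her induction on the number of classes and of edges: if the classes
indexed by `S` have no independent transversal but those indexed by `S \ {ρ}` do, then for some
`T ∋ ρ` all vertices of the classes in `T` are dominated by at most `2|T| - 2` vertices, which is
too few when every class has `2Δ` vertices. -/

open Finset Function

namespace SimpleGraph

variable {V ι : Type*}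

def IsIndepTransversal (G : SimpleGraph V) (C : ι → Finset V) (S : Finset ι) (f : ι → V) :
    Prop :=
  (∀ i ∈ S, f i ∈ C i) ∧ (S : Set ι).Pairwise fun i j => ¬ G.Adj (f i) (f j)

def HasIndepTransversal (G : SimpleGraph V) (C : ι → Finset V) (S : Finset ι) : Prop :=
  ∃ f, G.IsIndepTransversal C S f

variable {G H : SimpleGraph V} {C : ι → Finset V} {S : Finset ι} {f g : ι → V}
  {i j k ρ : ι} {w x y : V}

lemma exists_adj_of_not_hasIndepTransversal (hS : ¬ G.HasIndepTransversal C S)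
    (hf : ∀ i ∈ S, f i ∈ C i) : ∃ i ∈ S, ∃ j ∈ S, i ≠ j ∧ G.Adj (f i) (f j) := by
  by_contra! h
  exact hS ⟨f, hf, fun i hi j hj hij => h i hi j hj hij⟩

namespace IsIndepTransversal

lemma anti (hHG : H ≤ G) (hf : G.IsIndepTransversal C S f) : H.IsIndepTransversal C S f :=
  ⟨hf.1, hf.2.imp fun _ _ h hadj => h (hHG hadj)⟩

lemma injOn (hdisj : (S : Set ι).PairwiseDisjoint C) (hf : G.IsIndepTransversal C S f) :
    Set.InjOn f S :=
  fun i hi j hj hij => hdisj.elim_finset hi hj (f i) (hf.1 i hi) (hij ▸ hf.1 j hj)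

lemma update [DecidableEq ι] (hf : G.IsIndepTransversal C (S.erase i) f) (hx : x ∈ C i)
    (hxf : ∀ j ∈ S, j ≠ i → ¬ G.Adj x (f j)) :
    G.IsIndepTransversal C S (Function.update f i x) := by
  refine ⟨fun j hj => ?_, fun j hj k hk hjk => ?_⟩
  · rcases eq_or_ne j i with rfl | hji
    · simpa
    · simpa [hji] using hf.1 j (mem_erase.2 ⟨hji, hj⟩)
  rcases eq_or_ne j i with rfl | hji
  · rw [update_self, update_of_ne hjk.symm]
    exact hxf k hk hjk.symm
  rcases eq_or_ne k i with rfl | hki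
  · rw [update_self, update_of_ne hji]
    exact fun h => hxf j hj hji h.symm
  rw [update_of_ne hji, update_of_ne hki]
  exact hf.2 (by simp [hji, hj]) (by simp [hki, hk]) hjk

lemma eq_of_not_hasIndepTransversal (hdisj : (S : Set ι).PairwiseDisjoint C)
    (hg : (G.deleteEdges {s(x, y)}).IsIndepTransversal C S g) (hS : ¬ G.HasIndepTransversal C S)
    (hρ : ρ ∈ S) (hi : i ∈ S) (hx : x ∈ C ρ) (hy : y ∈ C i) : g ρ = x ∧ g i = y := by
  obtain ⟨j, hj, k, hk, hjk, hadj⟩ := exists_adj_of_not_hasIndepTransversal hS hg.1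
  have hedge : s(g j, g k) = s(x, y) := by
    by_contra h
    exact hg.2 hj hk hjk (by simp [hadj, h])
  rcases Sym2.eq_iff.1 hedge with ⟨rfl, rfl⟩ | ⟨rfl, rfl⟩
  · obtain rfl := hdisj.elim_finset hj hρ _ (hg.1 j hj) hx
    obtain rfl := hdisj.elim_finset hk hi _ (hg.1 k hk) hy
    exact ⟨rfl, rfl⟩
  · obtain rfl := hdisj.elim_finset hj hi _ (hg.1 j hj) hy
    obtain rfl := hdisj.elim_finset hk hρ _ (hg.1 k hk) hx
    exact ⟨rfl, rfl⟩

lemma not_adj_of_deleteEdges (hg : (G.deleteEdges {s(g ρ, g i)}).IsIndepTransversal C S g)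
    (hinj : Set.InjOn g S) (hρ : ρ ∈ S) (hi : i ∈ S) (hj : j ∈ S) (hk : k ∈ S) (hjk : j ≠ k)
    (hjρ : j ≠ ρ) (hji : j ≠ i) : ¬ G.Adj (g j) (g k) := by
  intro hadj
  have hedge : s(g j, g k) = s(g ρ, g i) := by
    by_contra h
    exact hg.2 hj hk hjk (by simp [hadj, h])
  rcases Sym2.eq_iff.1 hedge with ⟨h, -⟩ | ⟨h, -⟩
  · exact hjρ (hinj hj hρ h)
  · exact hji (hinj hj hi h)

end IsIndepTransversal

open Classical in
noncomputable def mergeClasses (G : SimpleGraph V) (C : ι → Finset V) (ρ i : ι) (x y : V)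
    (j : ι) : Finset V :=
  (if j = ρ then C ρ ∪ C i else C j).filter fun w => ¬ G.Adj x w ∧ ¬ G.Adj y w

lemma mem_mergeClasses : w ∈ mergeClasses G C ρ i x y j ↔
    (w ∈ C j ∨ j = ρ ∧ w ∈ C i) ∧ ¬ G.Adj x w ∧ ¬ G.Adj y w := by
  unfold mergeClasses
  split_ifs with h <;> simp [h]

lemma pairwiseDisjoint_mergeClasses [DecidableEq ι] (hdisj : (S : Set ι).PairwiseDisjoint C)
    (hi : i ∈ S) :
    ((S.erase i : Finset ι) : Set ι).PairwiseDisjoint (mergeClasses G C ρ i x y) := by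
  intro j hj k hk hjk
  rw [mem_coe, mem_erase] at hj hk
  refine Finset.disjoint_left.2 fun w hwj hwk => ?_
  have hclass {a b : ι} (ha : a ∈ S) (hb : b ∈ S) (hwa : w ∈ C a) (hwb : w ∈ C b) : a = b :=
    hdisj.elim_finset ha hb w hwa hwb
  rcases (mem_mergeClasses.1 hwj).1 with hCj | ⟨rfl, hCj⟩ <;>
    rcases (mem_mergeClasses.1 hwk).1 with hCk | ⟨rfl, hCk⟩
  · exact hjk (hclass hj.2 hk.2 hCj hCk)
  · exact hj.1 (hclass hj.2 hi hCj hCk)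
  · exact hk.1 (hclass hk.2 hi hCk hCj)
  · exact hjk rfl

lemma not_hasIndepTransversal_mergeClasses [DecidableEq ι] (hS : ¬ G.HasIndepTransversal C S)
    (hρ : ρ ∈ S) (hiρ : i ≠ ρ) (hx : x ∈ C ρ) (hy : y ∈ C i) :
    ¬ G.HasIndepTransversal (mergeClasses G C ρ i x y) (S.erase i) := by
  rintro ⟨h, hh⟩
  have hmem j (hj : j ∈ S.erase i) := mem_mergeClasses.1 (hh.1 j hj)
  have hC j (hj : j ∈ S.erase i) (hjρ : j ≠ ρ) : h j ∈ C j := by simpa [hjρ] using (hmem j hj).1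
  have hρ' : ρ ∈ S.erase i := mem_erase.2 ⟨hiρ.symm, hρ⟩
  apply hS
  rcases (hmem ρ hρ').1 with hhρ | ⟨-, hhρ⟩
  · -- `h` avoids the neighbours of `y ∈ C i`, so it extends by `y`
    have hh' : G.IsIndepTransversal C (S.erase i) h :=
      ⟨fun j hj => if hjρ : j = ρ then hjρ ▸ hhρ else hC j hj hjρ, hh.2⟩
    exact ⟨_, hh'.update hy fun j hj hji => (hmem j (mem_erase.2 ⟨hji, hj⟩)).2.2⟩
  · -- `h ρ` lies in `C i`: move it there and put `x` into class `ρ`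
    have hx' : G.IsIndepTransversal C (S.erase i) (update h ρ x) :=
      IsIndepTransversal.update
        ⟨fun j hj => hC j (mem_of_mem_erase hj) (ne_of_mem_erase hj), hh.2.mono (by simp)⟩ hx
        fun j hj _ => (hmem j hj).2.1
    refine ⟨_, hx'.update hhρ fun j hj hji => ?_⟩
    rcases eq_or_ne j ρ with rfl | hjρ
    · rw [update_self]
      exact fun hadj => (hmem j hρ').2.1 hadj.symm
    · rw [update_of_ne hjρ]
      exact hh.2 hρ' (mem_erase.2 ⟨hji, hj⟩) hjρ.symm

lemma IsIndepTransversal.mergeClasses [DecidableEq ι]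
    (hg : (G.deleteEdges {s(g ρ, g i)}).IsIndepTransversal C S g) (hinj : Set.InjOn g S)
    (hρ : ρ ∈ S) (hi : i ∈ S) :
    G.IsIndepTransversal (mergeClasses G C ρ i (g ρ) (g i)) ((S.erase i).erase ρ) g := by
  have hsub : (S.erase i).erase ρ ⊆ S := (erase_subset _ _).trans (erase_subset _ _)
  refine ⟨fun j hj => ?_, fun j hj k hk hjk => ?_⟩
  · simp only [mem_erase] at hj
    refine mem_mergeClasses.2 ⟨Or.inl (hg.1 j hj.2.2), fun h => ?_, fun h => ?_⟩
    · exact hg.not_adj_of_deleteEdges hinj hρ hi hj.2.2 hρ hj.1 hj.1 hj.2.1 h.symm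
    · exact hg.not_adj_of_deleteEdges hinj hρ hi hj.2.2 hi hj.2.1 hj.1 hj.2.1 h.symm
  · rw [mem_coe] at hj hk
    exact hg.not_adj_of_deleteEdges hinj hρ hi (hsub hj) (hsub hk) hjk (ne_of_mem_erase hj)
      (ne_of_mem_erase (mem_of_mem_erase hj))

lemma deleteEdges_lt_of_adj (hxy : G.Adj x y) : G.deleteEdges {s(x, y)} < G :=
  (deleteEdges_le _).lt_of_ne fun h => by
    rw [← h] at hxy
    simp at hxy

def HasDominatedSubfamily (G : SimpleGraph V) (C : ι → Finset V) (S : Finset ι) (ρ : ι) : Prop :=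
  ∃ T ⊆ S, ρ ∈ T ∧ ∃ X : Finset V, #X + 2 ≤ 2 * #T ∧ ∀ i ∈ T, ∀ w ∈ C i, ∃ x ∈ X, G.Adj x w

lemma HasDominatedSubfamily.mono (hHG : H ≤ G) (h : H.HasDominatedSubfamily C S ρ) :
    G.HasDominatedSubfamily C S ρ :=
  let ⟨T, hTS, hρT, X, hX, hdom⟩ := h
  ⟨T, hTS, hρT, X, hX, fun j hj w hw =>
    (hdom j hj w hw).imp fun _ => And.imp_right fun h => hHG h⟩

lemma HasDominatedSubfamily.of_mergeClasses [DecidableEq ι] (hi : i ∈ S)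
    (h : G.HasDominatedSubfamily (mergeClasses G C ρ i x y) (S.erase i) ρ) :
    G.HasDominatedSubfamily C S ρ := by
  classical
  obtain ⟨T, hTS, hρT, X, hX, hdom⟩ := h
  have hiT : i ∉ T := fun h => by simpa using hTS h
  refine ⟨insert i T, insert_subset hi (hTS.trans (erase_subset _ _)), mem_insert_of_mem hρT,
    insert x (insert y X), ?_, fun j hj w hw => ?_⟩
  · have := card_insert_le x (insert y X)
    have := card_insert_le y X
    rw [card_insert_of_notMem hiT]
    omega
  by_cases hxw : G.Adj x w
  · exact ⟨x, mem_insert_self _ _, hxw⟩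
  by_cases hyw : G.Adj y w
  · exact ⟨y, mem_insert_of_mem (mem_insert_self _ _), hyw⟩
  obtain ⟨z, hz, hzw⟩ : ∃ z ∈ X, G.Adj z w := by
    rcases mem_insert.1 hj with rfl | hjT
    · exact hdom ρ hρT w (mem_mergeClasses.2 ⟨Or.inr ⟨rfl, hw⟩, hxw, hyw⟩)
    · exact hdom j hjT w (mem_mergeClasses.2 ⟨Or.inl hw, hxw, hyw⟩)
  exact ⟨z, mem_insert_of_mem (mem_insert_of_mem hz), hzw⟩

theorem hasDominatedSubfamily_of_not_hasIndepTransversal [Finite V] [DecidableEq ι]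
    (hρ : ρ ∈ S) (hdisj : (S : Set ι).PairwiseDisjoint C) (hS : ¬ G.HasIndepTransversal C S)
    (hSρ : G.HasIndepTransversal C (S.erase ρ)) : G.HasDominatedSubfamily C S ρ := by
  induction S using Finset.strongInduction generalizing G C ρ with | H S ihS => ?_
  induction G using WellFoundedLT.induction generalizing C ρ with | ind G ihG => ?_
  obtain ⟨f, hf⟩ := hSρ
  obtain hCρ | ⟨x, hx⟩ := (C ρ).eq_empty_or_nonempty
  · exact ⟨{ρ}, by simpa, mem_singleton_self ρ, ∅, by simp, by simp [hCρ]⟩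
  obtain ⟨i, hi, y, hy, hxy⟩ : ∃ i ∈ S.erase ρ, ∃ y ∈ C i, G.Adj x y := by
    by_contra! h
    exact hS ⟨_, hf.update hx fun j hj hjρ =>
      h j (mem_erase.2 ⟨hjρ, hj⟩) _ (hf.1 j (mem_erase.2 ⟨hjρ, hj⟩))⟩
  obtain ⟨hiρ, hiS⟩ := mem_erase.1 hi
  -- Either `G - xy` still has no transversal and we recurse on it, or a transversal of `G - xy`
  -- uses both `x` and `y`; then classes `ρ` and `i` are merged, minus the neighbours of `x, y`.
  by_cases hG' : (G.deleteEdges {s(x, y)}).HasIndepTransversal C S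
  · obtain ⟨g, hg⟩ := hG'
    obtain ⟨rfl, rfl⟩ := hg.eq_of_not_hasIndepTransversal hdisj hS hρ hiS hx hy
    exact HasDominatedSubfamily.of_mergeClasses hiS <| ihS _ (erase_ssubset hiS)
      (mem_erase.2 ⟨hiρ.symm, hρ⟩) (pairwiseDisjoint_mergeClasses hdisj hiS)
      (not_hasIndepTransversal_mergeClasses hS hρ hiρ hx hy)
      ⟨g, hg.mergeClasses (hg.injOn hdisj) hρ hiS⟩
  · exact (ihG _ (deleteEdges_lt_of_adj hxy) hρ hdisj hG'
      ⟨f, hf.anti (deleteEdges_le _)⟩).mono (deleteEdges_le _)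

lemma card_le_card_mul_maxDegree [Fintype V] [DecidableRel G.Adj]
    {A X : Finset V} (hA : ∀ w ∈ A, ∃ x ∈ X, G.Adj x w) : #A ≤ #X * G.maxDegree := by
  classical
  calc #A ≤ #(X.biUnion fun x => G.neighborFinset x) := card_le_card fun w hw => by
        obtain ⟨x, hx, hxw⟩ := hA w hw
        exact mem_biUnion.2 ⟨x, hx, (mem_neighborFinset _ _ _).2 hxw⟩
    _ ≤ #X * G.maxDegree := card_biUnion_le_card_mul _ _ _ fun x _ => by
        rw [card_neighborFinset_eq_degree]
        exact G.degree_le_maxDegree x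

lemma not_hasDominatedSubfamily [Fintype V] [DecidableRel G.Adj]
    (hdisj : (S : Set ι).PairwiseDisjoint C) (hne : ∀ i ∈ S, (C i).Nonempty)
    (hsize : ∀ i ∈ S, 2 * G.maxDegree ≤ #(C i)) : ¬ G.HasDominatedSubfamily C S ρ := by
  classical
  rintro ⟨T, hTS, hρT, X, hX, hdom⟩
  have hlower : #T * (2 * G.maxDegree) ≤ #(T.biUnion C) := by
    rw [card_biUnion (hdisj.subset (coe_subset.2 hTS))]
    exact card_nsmul_le_sum _ _ _ fun i hi => hsize i (hTS hi)
  have hupper : #(T.biUnion C) ≤ #X * G.maxDegree :=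
    card_le_card_mul_maxDegree fun w hw => by
      obtain ⟨i, hi, hwi⟩ := mem_biUnion.1 hw
      exact hdom i hi w hwi
  have hpos : 0 < #(T.biUnion C) :=
    card_pos.2 ((hne ρ (hTS hρT)).mono (subset_biUnion_of_mem C hρT))
  have hΔ : G.maxDegree = 0 := by nlinarith
  rw [hΔ, mul_zero] at hupper
  omega

/-- **Haxell's theorem**. -/
theorem hasIndepTransversal_of_two_mul_maxDegree_le [Fintype V] [Nonempty V]
    (G : SimpleGraph V) [DecidableRel G.Adj] {C : ι → Finset V} {S : Finset ι}
    (hdisj : (S : Set ι).PairwiseDisjoint C) (hne : ∀ i ∈ S, (C i).Nonempty)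
    (hsize : ∀ i ∈ S, 2 * G.maxDegree ≤ #(C i)) : G.HasIndepTransversal C S := by
  classical
  induction S using Finset.induction_on with
  | empty => exact ⟨fun _ => Classical.arbitrary V, by simp, by simp⟩
  | insert ρ S hρS ih =>
    by_contra hno
    have hS : G.HasIndepTransversal C ((insert ρ S).erase ρ) := by
      rw [erase_insert hρS]
      exact ih (hdisj.subset (by simp)) (fun i hi => hne i (mem_insert_of_mem hi))
        fun i hi => hsize i (mem_insert_of_mem hi)
    exact not_hasDominatedSubfamily hdisj hne hsize
      (hasDominatedSubfamily_of_not_hasIndepTransversal (mem_insert_self ρ S) hdisj hno hS)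

end SimpleGraph

section Coloring

variable {V : Type*} [Fintype V] {G : SimpleGraph V} {c : V → ℕ}

lemma chi_le_of_colorable {W : Type*} {H : SimpleGraph W} {m : ℕ} (h : H.Colorable m) :
    chi H ≤ m := by
  simpa [chi] using ENat.toNat_le_toNat h.chromaticNumber_le (ENat.natCast_ne_top m)

lemma chi_le_one_of_forall_not_adj {W : Type*} {H : SimpleGraph W} (h : ∀ u v, ¬ H.Adj u v) :
    chi H ≤ 1 :=
  chi_le_of_colorable ⟨Coloring.mk (fun _ => 0) fun huv => (h _ _ huv).elim⟩

lemma chi_induce_le_chi (s : Set V) : chi (G.induce s) ≤ chi G :=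
  ENat.toNat_le_toNat (chromaticNumber_mono_of_hom (Embedding.induce s).toHom)
    (chromaticNumber_ne_top_iff_exists.2 ⟨_, G.colorable_of_fintype⟩)

lemma card_le_indepNum' {s : Finset V} (hs : G.IsIndepSet s) : #s ≤ indepNum' G := by
  unfold indepNum'
  refine le_trans ?_ (le_sup (mem_univ s))
  rw [if_pos (show ∀ u ∈ s, ∀ v ∈ s, ¬ G.Adj u v from
    fun u hu v hv huv => hs hu hv (G.ne_of_adj huv) huv)]

lemma exists_isProper_phiC_eq_phi (G : SimpleGraph V) : ∃ c, IsProper G c ∧ phiC G c = phi G :=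
  Nat.sInf_mem (s := {n | ∃ c, IsProper G c ∧ phiC G c = n})
    ⟨_, fun v => Fintype.equivFin V v, fun _ _ huv h =>
      G.ne_of_adj huv ((Fintype.equivFin V).injective (Fin.val_injective h)), rfl⟩

lemma card_image_le_phiC_add_chi (s : Finset V) :
    #(s.image c) ≤ phiC G c + chi (G.induce (s : Set V)) := by
  have : disc G c s ≤ phiC G c := le_sup (mem_univ s)
  unfold disc at this
  omega

lemma card_image_le_phiC_add_one {s : Finset V} (hs : G.IsIndepSet s) :
    #(s.image c) ≤ phiC G c + 1 := by
  have hχ : chi (G.induce (s : Set V)) ≤ 1 :=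
    chi_le_one_of_forall_not_adj fun u v huv => hs u.2 v.2 (G.ne_of_adj huv) huv
  have := card_image_le_phiC_add_chi (G := G) (c := c) s
  omega

lemma IsProper.isIndepSet_colorClass (hc : IsProper G c) (j : ℕ) :
    G.IsIndepSet ({v | c v = j} : Finset V) := by
  intro u hu v hv _ huv
  simp only [coe_filter, mem_univ, true_and, Set.mem_ofPred_eq] at hu hv
  exact hc huv (hu.trans hv.symm)

lemma card_le_phiC_add_one_of_two_mul_maxDegree_le [DecidableRel G.Adj] {B : Finset ℕ}
    (hB : ∀ j ∈ B, ({v | c v = j} : Finset V).Nonempty)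
    (hsize : ∀ j ∈ B, 2 * G.maxDegree ≤ #({v | c v = j} : Finset V)) :
    #B ≤ phiC G c + 1 := by
  classical
  obtain rfl | ⟨j, hj⟩ := B.eq_empty_or_nonempty
  · simp
  have : Nonempty V := ⟨(hB j hj).choose⟩
  obtain ⟨f, hf, hfind⟩ := G.hasIndepTransversal_of_two_mul_maxDegree_le
    (Set.pairwiseDisjoint_filter c _ univ) hB hsize
  have hcf : ∀ j ∈ B, c (f j) = j := fun j hj => by simpa using hf j hj
  have hindep : G.IsIndepSet (B.image f : Set V) := by
    rintro _ hu _ hv huv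
    obtain ⟨i, hi, rfl⟩ := mem_image.1 (mem_coe.1 hu)
    obtain ⟨k, hk, rfl⟩ := mem_image.1 (mem_coe.1 hv)
    exact hfind hi hk fun hik => huv (hik ▸ rfl)
  calc #B = #((B.image f).image c) := by
        rw [image_image]
        congr 1
        exact (image_congr fun j hj => hcf j hj).trans image_id' |>.symm
    _ ≤ phiC G c + 1 := card_image_le_phiC_add_one hindep

theorem IsProper.card_le_of_two_mul_maxDegree_le [DecidableRel G.Adj] (hc : IsProper G c)
    (hα : 2 * G.maxDegree ≤ indepNum' G) :
    (Fintype.card V : ℤ) ≤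
      (phiC G c + 1) * indepNum' G + (2 * G.maxDegree - 1) * ((chi G : ℤ) - 1) := by
  classical
  set Δ := G.maxDegree
  set α := indepNum' G
  set t := phiC G c
  set B := (univ.image c).filter fun j => 2 * Δ ≤ #({v | c v = j} : Finset V)
  set L := (univ.image c).filter fun j => ¬ 2 * Δ ≤ #({v | c v = j} : Finset V)
  have hB : #B ≤ t + 1 :=
    card_le_phiC_add_one_of_two_mul_maxDegree_le
      (fun j hj => by
        obtain ⟨v, -, rfl⟩ := mem_image.1 (mem_filter.1 hj).1
        exact ⟨v, by simp⟩)
      fun j hj => (mem_filter.1 hj).2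
  have hBL : #B + #L ≤ t + chi G := by
    rw [card_filter_add_card_filter_not]
    exact (card_image_le_phiC_add_chi univ).trans (Nat.add_le_add_left (chi_induce_le_chi _) _)
  set Sb := ∑ j ∈ B, #({v | c v = j} : Finset V)
  set Sl := ∑ j ∈ L, #({v | c v = j} : Finset V)
  have hn : Fintype.card V = Sb + Sl := by
    rw [sum_filter_add_sum_filter_not, ← card_univ, card_eq_sum_card_image c univ]
  have hbig : Sb ≤ #B * α :=
    sum_le_card_nsmul _ _ _ fun j _ => card_le_indepNum' (hc.isIndepSet_colorClass j)
  have hsmall : (Sl : ℤ) ≤ #L * (2 * Δ - 1) := by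
    push_cast [Sl]
    refine sum_le_card_nsmul _ _ _ fun j hj => ?_
    have := (mem_filter.1 hj).2
    omega
  zify at hB hBL hn hbig hα
  rcases Nat.eq_zero_or_pos Δ with hΔ | hΔ
  · -- `2Δ - 1 = -1` forces `L = ∅`, and the missing term is paid for by `χ ≤ 1`
    have hχ : chi G ≤ 1 := chi_le_one_of_forall_not_adj fun u v => by
      simp [(maxDegree_eq_zero_iff (G := G)).1 hΔ]
    zify at hχ
    simp only [hΔ, CharP.cast_eq_zero, mul_zero, zero_sub] at hsmall ⊢
    nlinarith [mul_le_mul_of_nonneg_right hB (Int.natCast_nonneg α)]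
  · zify at hΔ
    nlinarith [mul_le_mul_of_nonneg_right hB (show (0 : ℤ) ≤ α - (2 * Δ - 1) by linarith),
      mul_le_mul_of_nonneg_right hBL (show (0 : ℤ) ≤ 2 * Δ - 1 by linarith)]

end Coloring

theorem stmt10 {V : Type*} [Fintype V] (G : SimpleGraph V) [DecidableRel G.Adj]
    (hα : 2 * G.maxDegree ≤ indepNum' G) :
    ((Fintype.card V : ℝ) - (2 * (G.maxDegree : ℝ) - 1) * ((chi G : ℝ) - 1))
        / (indepNum' G : ℝ) - 1 ≤ (phi G : ℝ) := by
  obtain ⟨c, hc, hcφ⟩ := exists_isProper_phiC_eq_phi G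
  have hcard : (Fintype.card V : ℝ) ≤
      (phi G + 1) * indepNum' G + (2 * G.maxDegree - 1) * ((chi G : ℝ) - 1) := by
    exact_mod_cast hcφ ▸ hc.card_le_of_two_mul_maxDegree_le hα
  rcases Nat.eq_zero_or_pos (indepNum' G) with hα0 | hαpos
  · rw [hα0, Nat.cast_zero, div_zero]
    linarith [(phi G).cast_nonneg (α := ℝ)]
  rw [sub_le_iff_le_add, div_le_iff₀ (by exact_mod_cast hαpos)]
  linarith
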